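/- arXiv:2604.01413 — 2 statements merged into one kernel-verified Lean document; each statement's English description precedes it below -/
import Mathlib

section
/- For exchangeable real-valued random variables S_1, ..., S_{n+1}, the probability that S_{n+1} is strictly less than at least ⌈(n+1)(1-α)⌉ of the values S_1, ..., S_{n+1} is at most α, for any α ∈ (0,1). -/
/-!
Write `numGreater x j` for the number of coordinates of `x` strictly above `x j`. For any
`x : Fin m → ℝ`, at most `m - k` indices `j` have `k ≤ numGreater x j`: the one among them with the
largest value has `k` values strictly above it, and none of those lies in the set. By
exchangeability every index has the same probability of having at least `k` values above it, so
`(n + 1) · P(k ≤ numGreater S last) ≤ n + 1 - k ≤ (n + 1) α` for `k = ⌈(n + 1)(1 - α)⌉`. Ties are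
harmless because only strictly larger values are counted.
-/

open MeasureTheory Finset

open Classical in
theorem sum_measure_le_mul_measure_univ {α ι : Type*} [MeasurableSpace α] (μ : Measure α)
    (s : Finset ι) {E : ι → Set α} (hE : ∀ i, MeasurableSet (E i)) {N : ℕ}
    (h : ∀ a, #{i ∈ s | a ∈ E i} ≤ N) : ∑ i ∈ s, μ (E i) ≤ N * μ Set.univ := by
  calc ∑ i ∈ s, μ (E i) = ∫⁻ a, ∑ i ∈ s, (E i).indicator 1 a ∂μ := by
        rw [lintegral_finsetSum _ fun i _ => measurable_one.indicator (hE i)]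
        simp [lintegral_indicator_one (hE _)]
    _ ≤ ∫⁻ _, (N : ENNReal) ∂μ := lintegral_mono fun a => by
        simpa [Set.indicator_apply, ← card_filter] using h a
    _ = N * μ Set.univ := lintegral_const _

section numGreater

variable {ι β : Type*} [Fintype ι] [LinearOrder β]

def numGreater (x : ι → β) (j : ι) : ℕ := #{i | x j < x i}

theorem card_filter_le_numGreater_le (x : ι → β) (k : ℕ) :
    #{j | k ≤ numGreater x j} ≤ Fintype.card ι - k := by
  classical
  set T := ({j | k ≤ numGreater x j} : Finset ι)
  rcases T.eq_empty_or_nonempty with hT | hT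
  · simp [hT]
  obtain ⟨j, hjT, hjmax⟩ := T.exists_max_image x hT
  have hdisj : Disjoint T ({i | x j < x i} : Finset ι) :=
    disjoint_left.2 fun i hi hlt => not_lt.2 (hjmax i hi) (mem_filter.1 hlt).2
  have := card_union_of_disjoint hdisj ▸ card_le_univ _
  have hk : k ≤ numGreater x j := (mem_filter.1 hjT).2
  unfold numGreater at hk
  omega

theorem numGreater_comp_perm (x : ι → β) (σ : Equiv.Perm ι) (j : ι) :
    numGreater (x ∘ σ) j = numGreater x (σ j) := by
  unfold numGreater
  exact card_bij' (fun i _ => σ i) (fun i _ => σ.symm i) (by simp) (by simp) (by simp) (by simp)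

theorem measurable_numGreater [TopologicalSpace β] [MeasurableSpace β] [OpensMeasurableSpace β]
    [SecondCountableTopology β] [OrderClosedTopology β] (j : ι) :
    Measurable fun x : ι → β => numGreater x j := by
  simp only [numGreater, card_filter]
  exact measurable_sum _ fun i _ => Measurable.ite
    (measurableSet_lt (measurable_pi_apply j) (measurable_pi_apply i))
    measurable_const measurable_const

end numGreater

theorem measure_le_numGreater_eq_of_exchangeable {Ω ι : Type*} [MeasurableSpace Ω] [Fintype ι]
    [DecidableEq ι] (μ : Measure Ω) (S : ι → Ω → ℝ) (hmeas : ∀ i, Measurable (S i))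
    (hexch : ∀ σ : Equiv.Perm ι,
      Measure.map (fun ω => fun i => S (σ i) ω) μ = Measure.map (fun ω => fun i => S i ω) μ)
    (k : ℕ) (j j' : ι) :
    μ {ω | k ≤ numGreater (fun i => S i ω) j} = μ {ω | k ≤ numGreater (fun i => S i ω) j'} := by
  set σ := Equiv.swap j j'
  set A := {x : ι → ℝ | k ≤ numGreater x j'}
  have hA : MeasurableSet A := measurable_numGreater j' measurableSet_Ici
  calc μ {ω | k ≤ numGreater (fun i => S i ω) j} = μ ((fun ω i => S (σ i) ω) ⁻¹' A) := by
        congr 1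
        ext ω
        change k ≤ numGreater (fun i => S i ω) j ↔ k ≤ numGreater ((fun i => S i ω) ∘ σ) j'
        rw [numGreater_comp_perm, Equiv.swap_apply_right]
    _ = μ ((fun ω i => S i ω) ⁻¹' A) := by
        rw [← Measure.map_apply (measurable_pi_lambda _ fun i => hmeas _) hA, hexch,
          Measure.map_apply (measurable_pi_lambda _ hmeas) hA]

theorem natCast_sub_ceil_mul_one_sub_le (m : ℕ) {α : ℝ} (hα : 0 ≤ α) :
    ((m - ⌈m * (1 - α)⌉₊ : ℕ) : ℝ) ≤ m * α := by
  rcases le_total ⌈m * (1 - α)⌉₊ m with h | h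
  · rw [Nat.cast_sub h]
    linarith [Nat.le_ceil ((m : ℝ) * (1 - α))]
  · rw [Nat.sub_eq_zero_of_le h, Nat.cast_zero]
    positivity

theorem conformal_rank_bound_general
    {Ω : Type*} [MeasurableSpace Ω] (μ : Measure Ω) [IsProbabilityMeasure μ]
    (n : ℕ) (S : Fin (n + 1) → Ω → ℝ)
    (hmeas : ∀ i, Measurable (S i))
    (hexch : ∀ σ : Equiv.Perm (Fin (n + 1)),
      Measure.map (fun ω => fun i => S (σ i) ω) μ =
      Measure.map (fun ω => fun i => S i ω) μ)
    (α : ℝ) (hα : α ∈ Set.Ioo (0 : ℝ) 1) :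
    (μ {ω | (⌈((n : ℝ) + 1) * (1 - α)⌉₊ : ℕ) ≤
        (Finset.univ.filter (fun i => S (Fin.last n) ω < S i ω)).card}).toReal ≤ α := by
  set k := ⌈((n : ℝ) + 1) * (1 - α)⌉₊
  set E : Fin (n + 1) → Set Ω := fun j => {ω | k ≤ numGreater (fun i => S i ω) j}
  have hE : ∀ j, MeasurableSet (E j) := fun j =>
    (measurable_numGreater j).comp (measurable_pi_lambda _ hmeas) measurableSet_Ici
  have hsum : ((n + 1 : ℕ) : ENNReal) * μ (E (Fin.last n)) ≤ ((n + 1 - k : ℕ) : ENNReal) :=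
    calc ((n + 1 : ℕ) : ENNReal) * μ (E (Fin.last n)) = ∑ j, μ (E j) := by
          simp [E, measure_le_numGreater_eq_of_exchangeable μ S hmeas hexch k _ (Fin.last n)]
      _ ≤ ((n + 1 - k : ℕ) : ENNReal) * μ Set.univ :=
          sum_measure_le_mul_measure_univ μ univ hE fun ω => by
            convert card_filter_le_numGreater_le (fun i => S i ω) k using 2 <;> simp [E]
      _ = ((n + 1 - k : ℕ) : ENNReal) := by simp
  have hreal : ((n : ℝ) + 1) * (μ (E (Fin.last n))).toReal ≤ ((n : ℝ) + 1) * α := by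
    have h := ENNReal.toReal_mono (ENNReal.natCast_ne_top _) hsum
    rw [ENNReal.toReal_mul, ENNReal.toReal_natCast, ENNReal.toReal_natCast] at h
    have hk := natCast_sub_ceil_mul_one_sub_le (n + 1) hα.1.le
    push_cast at h hk
    exact h.trans hk
  show (μ (E (Fin.last n))).toReal ≤ α
  exact le_of_mul_le_mul_left hreal (by positivity)

/-- For exchangeable real-valued random variables `S 0, ..., S n` (that is,
`n+1` variables), the probability that the last one is strictly less than at
least `⌈(n+1)(1-α)⌉` of all the values is at most `α`. -/
theorem conformal_rank_bound
    {Ω : Type*} [MeasurableSpace Ω] (μ : Measure Ω) [IsProbabilityMeasure μ]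
    (n : ℕ) (S : Fin (n + 1) → Ω → ℝ)
    (hmeas : ∀ i, Measurable (S i))
    (hexch : ∀ σ : Equiv.Perm (Fin (n + 1)),
      Measure.map (fun ω => fun i => S (σ i) ω) μ =
      Measure.map (fun ω => fun i => S i ω) μ)
    (hdist : ∀ i j, i ≠ j → μ {ω | S i ω = S j ω} = 0)
    (α : ℝ) (hα : α ∈ Set.Ioo (0 : ℝ) 1) :
    (μ {ω | (⌈((n : ℝ) + 1) * (1 - α)⌉₊ : ℕ) ≤
        (Finset.univ.filter (fun i => S (Fin.last n) ω < S i ω)).card}).toReal ≤ α :=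
  conformal_rank_bound_general μ n S hmeas hexch α hα
end

section
/- Split conformal prediction coverage: let (X_1,Y_1),...,(X_{n+1},Y_{n+1}) be exchangeable, let S be a fixed score function, set s_i = S(X_i,Y_i), and let q̂ be the ⌈(n+1)(1-α)⌉/n empirical quantile of s_1,...,s_n (assume ⌈(n+1)(1-α)⌉ ≤ n). Then P(s_{n+1} ≤ q̂) ≥ 1 - α. -/
open MeasureTheory

/-- The `k`-th smallest value (1-indexed) among `f 0, ..., f (n-1)`. -/
noncomputable def orderStat {n : ℕ} (f : Fin n → ℝ) (k : ℕ) : ℝ :=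
  (List.insertionSort (· ≤ ·) (List.ofFn f)).getD (k - 1) 0

/-!
Let `k = ⌈(n+1)(1-α)⌉` and let `E_j` be the event that the `j`-th score is at most the `k`-th
smallest of the other `n` scores, so that `E_{n+1}` is the coverage event. Exchangeability gives
every `E_j` the same probability. Deleting a value can only raise the `k`-th smallest, so each of
the (at least `k`) indices whose score is at most the `k`-th smallest of all `n+1` scores lies in
its event. Taking expectations, `(n+1) P(E_{n+1}) ≥ k ≥ (n+1)(1-α)`.
-/

open Finset ENNReal Function

theorem List.Pairwise.getElem_le_iff {α : Type*} [LinearOrder α] {l : List α}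
    (hl : l.Pairwise (· ≤ ·)) {m : ℕ} (hm : m < l.length) (c : α) :
    l[m] ≤ c ↔ m < l.countP (· ≤ c) := by
  induction l generalizing m with
  | nil => simp at hm
  | cons a t ih =>
    obtain ⟨ha, ht⟩ := List.pairwise_cons.mp hl
    cases m with
    | zero => simpa using fun x hx hxc => (ha x hx).trans hxc
    | succ m =>
      simp only [List.length_cons, Nat.add_lt_add_iff_right] at hm
      by_cases hac : a ≤ c
      · simp [hac, ih ht hm]
      · have hgt : ∀ x ∈ a :: t, c < x := by
          simpa using ⟨not_le.mp hac, fun x hx => (not_le.mp hac).trans_le (ha x hx)⟩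
        have hcount : (a :: t).countP (· ≤ c) = 0 :=
          List.countP_eq_zero.mpr fun x hx => by simpa using hgt x hx
        simpa [hcount] using hgt _ (List.getElem_mem (l := a :: t) (Nat.succ_lt_succ hm))

theorem List.countP_ofFn {α : Type*} {m : ℕ} (f : Fin m → α) (p : α → Prop) [DecidablePred p] :
    (List.ofFn f).countP (p ·) = #{i | p (f i)} := by
  rw [← Multiset.coe_countP, ← Fin.univ_val_map, Multiset.countP_map]
  rfl

section OrderStat

variable {m k : ℕ}

theorem orderStat_le_iff (f : Fin m → ℝ) (hk : 1 ≤ k) (hkm : k ≤ m) (c : ℝ) :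
    orderStat f k ≤ c ↔ k ≤ #{i | f i ≤ c} := by
  have hperm := List.perm_insertionSort (· ≤ ·) (List.ofFn f)
  have hlen : k - 1 < (List.insertionSort (· ≤ ·) (List.ofFn f)).length := by
    rw [hperm.length_eq, List.length_ofFn]; omega
  rw [orderStat, List.getD_eq_getElem _ _ hlen,
    (List.pairwise_insertionSort _ _).getElem_le_iff hlen, hperm.countP_eq, List.countP_ofFn]
  omega

theorem orderStat_le_orderStat_comp {m' : ℕ} (f : Fin m' → ℝ) {e : Fin m → Fin m'}
    (he : Injective e) (hk : 1 ≤ k) (hkm : k ≤ m) :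
    orderStat f k ≤ orderStat (f ∘ e) k := by
  rw [orderStat_le_iff f hk (hkm.trans (Fin.le_of_injective e he))]
  calc k ≤ #{i | (f ∘ e) i ≤ orderStat (f ∘ e) k} := (orderStat_le_iff _ hk hkm _).mp le_rfl
    _ ≤ _ := card_le_card_of_injOn e (fun i hi => by simpa using hi) he.injOn

theorem le_card_filter_le_orderStat_comp (f : Fin (m + 1) → ℝ)
    (e : Fin (m + 1) → Fin m → Fin (m + 1)) (he : ∀ j, Injective (e j)) (hk : 1 ≤ k) (hkm : k ≤ m) :
    k ≤ #{j | f j ≤ orderStat (f ∘ e j) k} :=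
  calc k ≤ #{j | f j ≤ orderStat f k} := (orderStat_le_iff f hk (by omega) _).mp le_rfl
    _ ≤ _ := card_le_card <| monotone_filter_right _ fun j _ hj =>
        hj.trans (orderStat_le_orderStat_comp f (he j) hk hkm)

theorem measurable_orderStat (hk : 1 ≤ k) (hkm : k ≤ m) :
    Measurable fun f : Fin m → ℝ => orderStat f k := by
  refine measurable_of_Iic fun c => ?_
  have hsub : (fun f => orderStat f k) ⁻¹' Set.Iic c =
      ⋃ T : Finset (Fin m), ⋃ _ : k ≤ #T, ⋂ i ∈ T, {f | f i ≤ c} := by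
    ext f
    simp only [Set.mem_preimage, Set.mem_Iic, orderStat_le_iff f hk hkm, Set.mem_iUnion,
      Set.mem_iInter, Set.mem_ofPred_eq]
    refine ⟨fun h => ⟨_, h, fun i hi => (mem_filter.mp hi).2⟩, fun ⟨T, hT, hTc⟩ => ?_⟩
    exact hT.trans (card_le_card fun i hi => mem_filter.mpr ⟨mem_univ i, hTc i hi⟩)
  rw [hsub]
  exact .iUnion fun T => .iUnion fun _ => .biInter T.countable_toSet fun i _ =>
    measurableSet_le (measurable_pi_apply i) measurable_const

end OrderStat

section Exchangeable

variable {Ω ι β : Type*} [MeasurableSpace Ω] [MeasurableSpace β] {μ : Measure Ω}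

theorem natCast_mul_measure_univ_le_sum_measure [Fintype ι] {E : ι → Set Ω}
    [∀ j, DecidablePred (· ∈ E j)] (hE : ∀ j, MeasurableSet (E j)) {k : ℕ}
    (hk : ∀ ω, k ≤ #{j | ω ∈ E j}) :
    k * μ Set.univ ≤ ∑ j, μ (E j) :=
  calc k * μ Set.univ = ∫⁻ _, (k : ℝ≥0∞) ∂μ := (lintegral_const _).symm
    _ ≤ ∫⁻ ω, ∑ j, (E j).indicator 1 ω ∂μ := lintegral_mono fun ω => by
        simpa [Set.indicator_apply, sum_boole] using hk ω
    _ = ∑ j, μ (E j) := by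
        rw [lintegral_finsetSum _ fun j _ => measurable_one.indicator (hE j)]
        exact sum_congr rfl fun j _ => lintegral_indicator_one (hE j)

theorem measure_perm_preimage_eq {Z : ι → Ω → β} (hZ : ∀ i, Measurable (Z i))
    (hexch : ∀ σ : Equiv.Perm ι,
      Measure.map (fun ω => fun i => Z (σ i) ω) μ = Measure.map (fun ω => fun i => Z i ω) μ)
    (σ : Equiv.Perm ι) {A : Set (ι → β)} (hA : MeasurableSet A) :
    μ {ω | (fun i => Z (σ i) ω) ∈ A} = μ {ω | (fun i => Z i ω) ∈ A} := by
  have h := congrArg (· A) (hexch σ)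
  rwa [Measure.map_apply (measurable_pi_lambda _ fun i => hZ (σ i)) hA,
    Measure.map_apply (measurable_pi_lambda _ hZ) hA] at h

theorem natCast_le_card_mul_measureReal_of_exchangeable [Fintype ι] [IsProbabilityMeasure μ]
    {Z : ι → Ω → β} (hZ : ∀ i, Measurable (Z i))
    (hexch : ∀ σ : Equiv.Perm ι,
      Measure.map (fun ω => fun i => Z (σ i) ω) μ = Measure.map (fun ω => fun i => Z i ω) μ)
    {A : Set (ι → β)} [DecidablePred (· ∈ A)] (hA : MeasurableSet A) (σ : ι → Equiv.Perm ι)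
    {k : ℕ} (hk : ∀ z : ι → β, k ≤ #{j | z ∘ σ j ∈ A}) :
    k ≤ Fintype.card ι * μ.real {ω | (fun i => Z i ω) ∈ A} := by
  have hE : ∀ j, MeasurableSet {ω | (fun i => Z (σ j i) ω) ∈ A} := fun j =>
    measurable_pi_lambda _ (fun i => hZ (σ j i)) hA
  have hle : (k : ℝ≥0∞) ≤ Fintype.card ι * μ {ω | (fun i => Z i ω) ∈ A} :=
    calc (k : ℝ≥0∞) = k * μ Set.univ := by rw [measure_univ, mul_one]
      _ ≤ ∑ j, μ {ω | (fun i => Z (σ j i) ω) ∈ A} :=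
          natCast_mul_measure_univ_le_sum_measure hE fun ω => hk fun i => Z i ω
      _ = Fintype.card ι * μ {ω | (fun i => Z i ω) ∈ A} := by
          simp only [measure_perm_preimage_eq hZ hexch _ hA, sum_const, card_univ,
            nsmul_eq_mul]
  simpa [measureReal_def] using ENNReal.toReal_mono (by finiteness) hle

end Exchangeable

theorem split_conformal_coverage_general
    {Ω : Type*} [MeasurableSpace Ω] (μ : Measure Ω) [IsProbabilityMeasure μ]
    {X Y : Type*} [MeasurableSpace X] [MeasurableSpace Y]
    (n : ℕ)
    (Z : Fin (n + 1) → Ω → X × Y)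
    (hZmeas : ∀ i, Measurable (Z i))
    (hexch : ∀ σ : Equiv.Perm (Fin (n + 1)),
      Measure.map (fun ω => fun i => Z (σ i) ω) μ =
      Measure.map (fun ω => fun i => Z i ω) μ)
    (S : X × Y → ℝ) (hS : Measurable S)
    (α : ℝ) (hα : α ∈ Set.Ioo (0 : ℝ) 1)
    (hidx : ⌈((n : ℝ) + 1) * (1 - α)⌉₊ ≤ n) :
    1 - α ≤ (μ {ω | S (Z (Fin.last n) ω) ≤
        orderStat (fun i : Fin n => S (Z i.castSucc ω))
          ⌈((n : ℝ) + 1) * (1 - α)⌉₊}).toReal := by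
  set k := ⌈((n : ℝ) + 1) * (1 - α)⌉₊
  have hk : 1 ≤ k := Nat.one_le_iff_ne_zero.mpr <| (Nat.ceil_pos.mpr <|
    mul_pos (by positivity) (sub_pos.mpr hα.2)).ne'
  have hA : MeasurableSet
      {z : Fin (n + 1) → X × Y | S (z (Fin.last n)) ≤ orderStat (fun i => S (z i.castSucc)) k} :=
    measurableSet_le (hS.comp (measurable_pi_apply _)) <| (measurable_orderStat hk hidx).comp <|
      measurable_pi_lambda _ fun i => hS.comp (measurable_pi_apply _)
  have hcover := natCast_le_card_mul_measureReal_of_exchangeable hZmeas hexch hA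
    (fun j => Equiv.swap (Fin.last n) j) fun z => by
      simpa [Equiv.swap_apply_left, comp_def] using le_card_filter_le_orderStat_comp (S ∘ z)
        (fun j => Equiv.swap (Fin.last n) j ∘ Fin.castSucc)
        (fun j => (Equiv.injective _).comp (Fin.castSucc_injective n)) hk hidx
  have hceil : ((n : ℝ) + 1) * (1 - α) ≤ k := Nat.le_ceil _
  simp only [Fintype.card_fin, Nat.cast_add, Nat.cast_one, Set.mem_ofPred_eq] at hcover
  exact le_of_mul_le_mul_left (hceil.trans hcover) (by positivity)

/-- Split conformal prediction coverage: for exchangeable data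
`Z 0, ..., Z n` and a fixed score function `S`, with
`q̂` the `⌈(n+1)(1-α)⌉`-th smallest of the first `n` scores,
`P(S(Z_{n+1}) ≤ q̂) ≥ 1 - α`. -/
theorem split_conformal_coverage
    {Ω : Type*} [MeasurableSpace Ω] (μ : Measure Ω) [IsProbabilityMeasure μ]
    {X Y : Type*} [MeasurableSpace X] [MeasurableSpace Y]
    (n : ℕ) (hn : 0 < n)
    (Z : Fin (n + 1) → Ω → X × Y)
    (hZmeas : ∀ i, Measurable (Z i))
    (hexch : ∀ σ : Equiv.Perm (Fin (n + 1)),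
      Measure.map (fun ω => fun i => Z (σ i) ω) μ =
      Measure.map (fun ω => fun i => Z i ω) μ)
    (S : X × Y → ℝ) (hS : Measurable S)
    (α : ℝ) (hα : α ∈ Set.Ioo (0 : ℝ) 1)
    (hidx : ⌈((n : ℝ) + 1) * (1 - α)⌉₊ ≤ n) :
    1 - α ≤ (μ {ω | S (Z (Fin.last n) ω) ≤
        orderStat (fun i : Fin n => S (Z i.castSucc ω))
          ⌈((n : ℝ) + 1) * (1 - α)⌉₊}).toReal :=
  split_conformal_coverage_general μ n Z hZmeas hexch S hS α hα hidx
end
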